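/- arXiv:1911.01647 — 5 statements merged into one kernel-verified Lean document; each statement's English description precedes it below -/
import Mathlib

section
/- Let P = {x ∈ ℝⁿ | Ax ≤ 0, Bx = 0} for matrices A ∈ ℝ^{m₁×n}, B ∈ ℝ^{m₂×n}. Then the polar cone of P equals {Aᵀμ + Bᵀν | μ ∈ ℝ^{m₁}, μ ≥ 0, ν ∈ ℝ^{m₂}}. -/
/-!
A finitely generated cone is closed: if the generators are linearly dependent, a kernel vector
lets one shift any conic combination until one coefficient vanishes (Carathéodory), so the cone is
a finite union of cones on fewer generators; with independent generators it is the image of the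
closed orthant under a closed embedding. Separating a point from this closed cone gives Farkas'
lemma `(∃ μ ≥ 0, y = Mᵀ μ) ↔ ∀ x, M x ≤ 0 → ⟪x, y⟫ ≤ 0`, and the theorem is Farkas' lemma for
`M = [A; B; -B]`, the equation `B x = 0` being the pair `B x ≤ 0`, `-B x ≤ 0`.
-/

open Matrix Set

theorem exists_nonneg_sub_smul_apply_eq_zero {ι : Type*} [Fintype ι] {l c : ι → ℝ}
    (hl : 0 ≤ l) (hc : ∃ i, 0 < c i) : ∃ (t : ℝ) (i : ι), 0 ≤ l - t • c ∧ (l - t • c) i = 0 := by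
  classical
  obtain ⟨i, hi, hmin⟩ := (Finset.univ.filter fun j => 0 < c j).exists_min_image
    (fun j => l j / c j) (by simpa [Finset.Nonempty] using hc)
  rw [Finset.mem_filter] at hi
  refine ⟨l i / c i, i, fun j => ?_, by simp [div_mul_cancel₀ _ hi.2.ne']⟩
  simp only [Pi.zero_apply, Pi.sub_apply, Pi.smul_apply, smul_eq_mul, sub_nonneg]
  rcases lt_or_ge 0 (c j) with hcj | hcj
  · exact (le_div_iff₀ hcj).1 (hmin j (by simp [hcj]))
  · exact (mul_nonpos_of_nonneg_of_nonpos (div_nonneg (hl i) hi.2.le) hcj).trans (hl j)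

namespace PointedCone

variable {ι E : Type*} [Fintype ι] [AddCommGroup E] [Module ℝ E]

theorem coe_hull_range (v : ι → E) :
    (hull ℝ (range v) : Set E) = Fintype.linearCombination ℝ v '' Ici 0 := by
  ext x
  simp only [SetLike.mem_coe, Submodule.mem_span_range_iff_exists_fun, mem_image, mem_Ici,
    Fintype.linearCombination_apply]
  constructor
  · rintro ⟨c, rfl⟩
    exact ⟨fun i => c i, fun i => (c i).2, rfl⟩
  · rintro ⟨l, hl, rfl⟩
    exact ⟨fun i => ⟨l i, hl i⟩, rfl⟩

theorem coe_hull_range_eq_iUnion_of_not_linearIndependent {v : ι → E}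
    (hv : ¬LinearIndependent ℝ v) :
    (hull ℝ (range v) : Set E) = ⋃ i : ι, (hull ℝ (range fun j : {j // j ≠ i} => v j) : Set E) := by
  refine subset_antisymm ?_ (iUnion_subset fun i => Submodule.span_mono ?_)
  · obtain ⟨c, hcv, hc⟩ : ∃ c : ι → ℝ, Fintype.linearCombination ℝ v c = 0 ∧ ∃ i, 0 < c i := by
      obtain ⟨g, hgv, i, hgi⟩ := Fintype.not_linearIndependent_iff.1 hv
      rcases hgi.lt_or_gt with hneg | hpos
      · exact ⟨-g, by simp [Fintype.linearCombination_apply, hgv], i, by simpa using hneg⟩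
      · exact ⟨g, by simpa [Fintype.linearCombination_apply] using hgv, i, hpos⟩
    rw [coe_hull_range]
    rintro _ ⟨l, hl, rfl⟩
    obtain ⟨t, i, hnonneg, hzero⟩ := exists_nonneg_sub_smul_apply_eq_zero hl hc
    have hshift : Fintype.linearCombination ℝ v l = Fintype.linearCombination ℝ v (l - t • c) := by
      simp [hcv]
    refine mem_iUnion.2 ⟨i, ?_⟩
    rw [hshift, Fintype.linearCombination_apply]
    refine Submodule.sum_mem _ fun j _ => ?_
    by_cases hj : j = i
    · simp [hj, hzero]
    · exact smul_mem _ (hnonneg j) (subset_hull ⟨⟨j, hj⟩, rfl⟩)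
  · exact range_comp_subset_range _ v

section Topology

variable [TopologicalSpace E] [IsTopologicalAddGroup E] [ContinuousSMul ℝ E] [T2Space E]

theorem isClosed_hull_range (v : ι → E) : IsClosed (hull ℝ (range v) : Set E) := by
  induction h : Fintype.card ι using Nat.strong_induction_on generalizing ι with
  | _ k ih =>
  classical
  by_cases hv : LinearIndependent ℝ v
  · rw [coe_hull_range]
    exact (LinearMap.isClosedEmbedding_of_injective (LinearMap.ker_eq_bot.2
      hv.fintypeLinearCombination_injective)).isClosedMap _ isClosed_Ici
  · rw [coe_hull_range_eq_iUnion_of_not_linearIndependent hv]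
    exact isClosed_iUnion_of_finite fun i =>
      ih _ (h ▸ Fintype.card_subtype_lt (p := (· ≠ i)) (not_not.2 rfl)) _ rfl

end Topology

end PointedCone

namespace Matrix

theorem exists_nonneg_eq_transpose_mulVec_iff {m n : Type*} [Fintype m] [Fintype n]
    (M : Matrix m n ℝ) (y : n → ℝ) :
    (∃ μ, 0 ≤ μ ∧ y = Mᵀ *ᵥ μ) ↔ ∀ x, M *ᵥ x ≤ 0 → x ⬝ᵥ y ≤ 0 := by
  classical
  have hcone : (∃ μ, 0 ≤ μ ∧ y = Mᵀ *ᵥ μ) ↔ y ∈ PointedCone.hull ℝ (range M) := by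
    rw [← SetLike.mem_coe, PointedCone.coe_hull_range M]
    simp only [mem_image, mem_Ici, mulVec_transpose, vecMul_eq_sum, eq_comm]
    rfl
  constructor
  · rintro ⟨μ, hμ, rfl⟩ x hx
    rw [dotProduct_mulVec, vecMul_transpose]
    exact Finset.sum_nonpos fun i _ => mul_nonpos_of_nonpos_of_nonneg (hx i) (hμ i)
  · intro hy
    by_contra hyM
    rw [hcone] at hyM
    let C : ProperCone ℝ (n → ℝ) := ⟨_, PointedCone.isClosed_hull_range M⟩
    obtain ⟨f, hfC, hfy⟩ := C.hyperplane_separation_point hyM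
    set w := (dotProductEquiv ℝ n).symm (f : Module.Dual ℝ (n → ℝ))
    have hw : ∀ z, w ⬝ᵥ z = f z := fun z =>
      LinearMap.congr_fun ((dotProductEquiv ℝ n).apply_symm_apply _) z
    have := hy (-w) fun i => by
      rw [mulVec_neg, Pi.neg_apply, Pi.zero_apply, neg_nonpos, mulVec, dotProduct_comm, hw]
      exact hfC _ (PointedCone.subset_hull (mem_range_self i))
    rw [neg_dotProduct, hw] at this
    linarith

variable {m₁ m₂ n : Type*} (A : Matrix m₁ n ℝ) (B : Matrix m₂ n ℝ)

theorem fromRows_mulVec_nonpos_iff [Fintype n] (x : n → ℝ) :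
    fromRows A (fromRows B (-B)) *ᵥ x ≤ 0 ↔ A *ᵥ x ≤ 0 ∧ B *ᵥ x = 0 := by
  simp only [fromRows_mulVec, neg_mulVec, ← Sum.elim_zero_zero, Sum.elim_le_elim_iff,
    neg_nonpos, le_antisymm_iff]

theorem exists_nonneg_eq_transpose_fromRows_mulVec_iff [Fintype m₁] [Fintype m₂] (y : n → ℝ) :
    (∃ μ, 0 ≤ μ ∧ y = (fromRows A (fromRows B (-B)))ᵀ *ᵥ μ) ↔
      ∃ μ ν, 0 ≤ μ ∧ y = Aᵀ *ᵥ μ + Bᵀ *ᵥ ν := by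
  simp only [transpose_fromRows, transpose_neg, fromCols_mulVec, neg_mulVec]
  constructor
  · rintro ⟨μ, hμ, rfl⟩
    refine ⟨μ ∘ Sum.inl, μ ∘ Sum.inr ∘ Sum.inl - μ ∘ Sum.inr ∘ Sum.inr, fun i => hμ _, ?_⟩
    rw [mulVec_sub, sub_eq_add_neg, Function.comp_assoc, Function.comp_assoc]
  · rintro ⟨μ, ν, hμ, rfl⟩
    refine ⟨Sum.elim μ (Sum.elim ν⁺ ν⁻), ?_, ?_⟩
    · rintro (i | j | j)
      exacts [hμ i, posPart_nonneg ν j, negPart_nonneg ν j]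
    · conv_lhs => rw [← posPart_sub_negPart ν]
      rw [mulVec_sub, sub_eq_add_neg]
      rfl

end Matrix

theorem polar_of_polyhedral_cone {n m₁ m₂ : ℕ}
    (A : Matrix (Fin m₁) (Fin n) ℝ) (B : Matrix (Fin m₂) (Fin n) ℝ) :
    {y : Fin n → ℝ |
        ∀ x ∈ {x : Fin n → ℝ | A.mulVec x ≤ 0 ∧ B.mulVec x = 0}, x ⬝ᵥ y ≤ 0} =
      {y : Fin n → ℝ | ∃ (μ : Fin m₁ → ℝ) (ν : Fin m₂ → ℝ),
        0 ≤ μ ∧ y = Aᵀ.mulVec μ + Bᵀ.mulVec ν} := by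
  ext y
  simp only [mem_ofPred_eq, ← fromRows_mulVec_nonpos_iff,
    ← exists_nonneg_eq_transpose_fromRows_mulVec_iff, exists_nonneg_eq_transpose_mulVec_iff]
end

section
/- Let X ⊆ ℝⁿ be closed and nonempty, let θ: ℝⁿ → ℝ be Hadamard directionally differentiable at x̄ ∈ X, and suppose θ*(x̄; d) > 0 for all nonzero tangent directions d ∈ T_X(x̄). Then the first-order growth condition holds at x̄: there exist a neighborhood U of x̄ and C > 0 such that θ(x) ≥ θ(x̄) + C‖x − x̄‖ for all x ∈ X ∩ U. In particular, x̄ is a strict local minimizer of θ over X. -/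
open Filter Topology

/-- The Bouligand (contingent) tangent cone to `X` at `x₀`. -/
def bouligandTangentCone {E : Type*} [NormedAddCommGroup E] [NormedSpace ℝ E]
    (X : Set E) (x₀ : E) : Set E :=
  {d | ∃ (t : ℕ → ℝ) (v : ℕ → E), (∀ k, 0 < t k) ∧ Tendsto t atTop (𝓝 0) ∧
    Tendsto v atTop (𝓝 d) ∧ ∀ k, x₀ + t k • v k ∈ X}

set_option maxHeartbeats 800000 in
theorem first_order_growth_of_hadamard_positive {n : ℕ}
    (X : Set (EuclideanSpace ℝ (Fin n))) (hX : IsClosed X) (hne : X.Nonempty)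
    (θ : EuclideanSpace ℝ (Fin n) → ℝ) (x₀ : EuclideanSpace ℝ (Fin n)) (hx₀ : x₀ ∈ X)
    (Dh : EuclideanSpace ℝ (Fin n) → ℝ)
    (hHad : ∀ d, Tendsto
      (fun q : ℝ × EuclideanSpace ℝ (Fin n) => (θ (x₀ + q.1 • q.2) - θ x₀) / q.1)
      ((𝓝[>] 0) ×ˢ 𝓝 d) (𝓝 (Dh d)))
    (hpos : ∀ d ∈ bouligandTangentCone X x₀, d ≠ 0 → 0 < Dh d) :
    ∃ U ∈ 𝓝 x₀, ∃ C > (0 : ℝ), ∀ x ∈ X ∩ U, θ x₀ + C * ‖x - x₀‖ ≤ θ x := by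
  by_contra hcon
  push_neg at hcon
  have key : ∀ k : ℕ, ∃ x, x ∈ X ∧ ‖x - x₀‖ < 1/(k+1) ∧
      θ x < θ x₀ + (1/(k+1)) * ‖x - x₀‖ := by
    intro k
    obtain ⟨x, ⟨hxX, hxU⟩, hlt⟩ := hcon (Metric.ball x₀ (1/(k+1)))
      (Metric.ball_mem_nhds _ (by positivity)) (1/(k+1)) (by positivity)
    refine ⟨x, hxX, ?_, hlt⟩
    simpa [dist_eq_norm] using hxU
  choose x hxX hxnear hxlt using key
  have hne0 : ∀ k, x k ≠ x₀ := by
    intro k hk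
    have := hxlt k
    rw [hk] at this
    simp at this
  set t : ℕ → ℝ := fun k => ‖x k - x₀‖ with ht
  have htpos : ∀ k, 0 < t k := fun k => by
    simpa [ht, norm_pos_iff, sub_ne_zero] using hne0 k
  set d : ℕ → EuclideanSpace ℝ (Fin n) := fun k => (t k)⁻¹ • (x k - x₀) with hd
  have hdsphere : ∀ k, d k ∈ Metric.sphere (0 : EuclideanSpace ℝ (Fin n)) 1 := by
    intro k
    have hnorm : ‖d k‖ = 1 := by
      rw [hd]
      rw [norm_smul, Real.norm_eq_abs, abs_inv, abs_of_pos (htpos k)]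
      exact inv_mul_cancel₀ (htpos k).ne'
    simpa [Metric.mem_sphere, dist_eq_norm] using hnorm
  obtain ⟨d₀, hd₀, φ, hφ, hconv⟩ :=
    (isCompact_sphere (0 : EuclideanSpace ℝ (Fin n)) 1).tendsto_subseq hdsphere
  have hd₀ne : d₀ ≠ 0 := by
    intro h
    rw [h] at hd₀
    simp at hd₀
  have hrecon : ∀ k, x₀ + t k • d k = x k := by
    intro k
    simp [hd, smul_smul, mul_inv_cancel₀ (htpos k).ne']
  have htto : Tendsto (fun k => t (φ k)) atTop (𝓝 0) := by
    have h1 : Tendsto (fun k : ℕ => 1/((φ k : ℝ)+1)) atTop (𝓝 0) := by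
      apply tendsto_one_div_add_atTop_nhds_zero_nat.comp
      exact (tendsto_natCast_atTop_atTop).comp hφ.tendsto_atTop
    refine squeeze_zero (fun k => (htpos (φ k)).le) (fun k => (hxnear (φ k)).le) h1
  have htin : Tendsto (fun k => t (φ k)) atTop (𝓝[>] 0) := by
    rw [tendsto_nhdsWithin_iff]
    exact ⟨htto, Eventually.of_forall fun k => htpos (φ k)⟩
  have hcone : d₀ ∈ bouligandTangentCone X x₀ := by
    refine ⟨fun k => t (φ k), fun k => d (φ k), fun k => htpos (φ k), htto, hconv, ?_⟩
    intro k
    rw [hrecon]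
    exact hxX (φ k)
  have hpair : Tendsto (fun k => (t (φ k), d (φ k))) atTop
      ((𝓝[>] (0:ℝ)) ×ˢ 𝓝 d₀) := htin.prodMk hconv
  have hlim : Tendsto (fun k => (θ (x₀ + t (φ k) • d (φ k)) - θ x₀) / t (φ k))
      atTop (𝓝 (Dh d₀)) := by
    have h := (hHad d₀).comp hpair
    simpa only [Function.comp_def] using h
  have hbound : ∀ k, (θ (x₀ + t (φ k) • d (φ k)) - θ x₀) / t (φ k) ≤ 1/((k:ℝ)+1) := by
    intro k
    rw [hrecon]
    have h1 := hxlt (φ k)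
    have h2 : (θ (x (φ k)) - θ x₀) / t (φ k) ≤ 1/((φ k : ℝ)+1) := by
      rw [div_le_iff₀ (htpos (φ k))]
      linarith
    have hk : (k:ℝ) ≤ (φ k : ℝ) := by exact_mod_cast hφ.le_apply
    exact h2.trans (one_div_le_one_div_of_le (by positivity) (by linarith))
  have hDle : Dh d₀ ≤ 0 := by
    have h0 : Tendsto (fun k : ℕ => 1/((k:ℝ)+1)) atTop (𝓝 0) :=
      tendsto_one_div_add_atTop_nhds_zero_nat
    exact le_of_tendsto_of_tendsto' hlim h0 hbound
  exact absurd (hpos d₀ hcone hd₀ne) (not_lt.mpr hDle)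
end

section
/- Consider the bilevel problem min_{x,y} {½(x+3)² + ½(y+1)² | y ∈ S(x)} where S(x) = argmin_y {xy | 0 ≤ y ≤ 1}. The point (x̄, ȳ) = (0, 0) is a strict local minimizer: there is a neighborhood U of (0,0) such that for all (x,y) ∈ U with y ∈ S(x) and (x,y) ≠ (0,0), one has ½(x+3)² + ½(y+1)² > ½(0+3)² + ½(0+1)². -/
open Filter Topology

/-- The lower level solution map of `min_y { x*y : 0 ≤ y ≤ 1 }`. -/
def lowerLevelSol (x : ℝ) : Set ℝ :=
  {y ∈ Set.Icc (0 : ℝ) 1 | ∀ z ∈ Set.Icc (0 : ℝ) 1, x * y ≤ x * z}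

theorem strict_local_min_bilevel_example :
    ∃ U ∈ 𝓝 ((0, 0) : ℝ × ℝ), ∀ p ∈ U, p.2 ∈ lowerLevelSol p.1 → p ≠ (0, 0) →
      (1 / 2) * ((0 : ℝ) + 3) ^ 2 + (1 / 2) * ((0 : ℝ) + 1) ^ 2 <
        (1 / 2) * (p.1 + 3) ^ 2 + (1 / 2) * (p.2 + 1) ^ 2 := by
  refine ⟨Set.Ioo (-(1/2) : ℝ) (1/2) ×ˢ Set.univ, ?_, ?_⟩
  · exact prod_mem_nhds (Ioo_mem_nhds (by norm_num) (by norm_num)) univ_mem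
  · rintro ⟨x, y⟩ ⟨hx, -⟩ ⟨⟨hy0, hy1⟩, hmin⟩ hne
    simp only at *
    rcases lt_trichotomy x 0 with hlt | heq | hgt
    · have h1 := hmin 1 ⟨by norm_num, le_refl 1⟩
      have hy : y = 1 := le_antisymm hy1 (by nlinarith)
      subst hy
      nlinarith [hx.1]
    · subst heq
      have hy : y ≠ 0 := fun h => hne (by simp [h])
      have : 0 < y := lt_of_le_of_ne hy0 (Ne.symm hy)
      nlinarith
    · have h0 := hmin 0 ⟨le_refl 0, by norm_num⟩
      have hy : y = 0 := le_antisymm (by nlinarith) hy0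
      subst hy
      nlinarith
end

section
/- Consider the bilevel problem min_{x,y} {½(x+3)² + ½y² | y ∈ S(x)} where S(x) = argmin_y {xy | y ∈ [0,1]}. The point (x̄, ȳ) = (0, 0) is a strict local minimizer satisfying the second-order growth condition: there exist a neighborhood U of (0,0) and c > 0 such that ½(x+3)² + ½y² ≥ ½·9 + c(x² + y²) for all (x,y) ∈ U with y ∈ S(x). -/
open Filter Topology

theorem second_order_growth_bilevel_example :
    ∃ U ∈ 𝓝 ((0, 0) : ℝ × ℝ), ∃ c > (0 : ℝ), ∀ p ∈ U, p.2 ∈ lowerLevelSol p.1 →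
      (1 / 2) * (9 : ℝ) + c * (p.1 ^ 2 + p.2 ^ 2) ≤
        (1 / 2) * (p.1 + 3) ^ 2 + (1 / 2) * p.2 ^ 2 := by
  refine ⟨Set.Ioo (-(1/2) : ℝ) (1/2) ×ˢ Set.Ioo (-(1/2) : ℝ) (1/2), ?_, 1/4, by norm_num, ?_⟩
  · exact prod_mem_nhds (Ioo_mem_nhds (by norm_num) (by norm_num))
      (Ioo_mem_nhds (by norm_num) (by norm_num))
  · rintro ⟨x, y⟩ ⟨⟨hx1, hx2⟩, hy1, hy2⟩ ⟨⟨hy0, hy1'⟩, hmin⟩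
    simp only at *
    -- x cannot be negative: otherwise y = 1, contradicting y < 1/2
    rcases lt_trichotomy x 0 with hx | hx | hx
    · have := hmin 1 ⟨by norm_num, le_refl 1⟩
      have hy : (1 : ℝ) ≤ y := by nlinarith
      linarith
    · subst hx; nlinarith
    · -- x > 0 forces y = 0
      have := hmin 0 ⟨le_refl 0, by norm_num⟩
      have hy : y ≤ 0 := by nlinarith
      have : y = 0 := le_antisymm hy hy0
      subst this; nlinarith
end

section
/- Let φ(x) := inf_y {f(x,y) | g(x,y) ≤ 0} with f, g continuously differentiable, let (x̄, ȳ) be feasible for the bilevel problem (i.e., g(x̄,ȳ) ≤ 0 and f(x̄,ȳ) = φ(x̄)), and suppose φ is locally Lipschitz continuous and directionally differentiable at x̄, and Abadie's constraint qualification holds for the set {(x,y) | g(x,y) ≤ 0} at (x̄,ȳ). Then for every direction d = (δ_x, δ_y) with ∇g_i(x̄,ȳ)ᵀd ≤ 0 for all active indices i (those with g_i(x̄,ȳ) = 0), one has ∇f(x̄,ȳ)ᵀd − φ'(x̄; δ_x) ≥ 0. -/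
/-!
Along a tangent sequence `(x₀, y₀) + tₖ vₖ` of the feasible set, with `tₖ ↓ 0` and `vₖ → d`,
feasibility gives `φ(x₀ + tₖ vₖ.1) ≤ f((x₀, y₀) + tₖ vₖ)`, while `φ(x₀) = f(x₀, y₀)`; so the
difference quotients of `φ` are bounded by those of `f`. Differentiability of `f` and the local
Lipschitz continuity of `φ` make both quotients converge along such sequences (Hadamard directional
derivatives) to `∇f(x₀, y₀) d` and `φ'(x₀; d.1)`. Abadie's condition puts every linearized
direction `d` in the tangent cone.
-/

open Filter Topology

section HadamardDirectionalDerivative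

variable {E : Type*} [NormedAddCommGroup E] [NormedSpace ℝ E]
  {α : Type*} {l : Filter α} {t : α → ℝ} {v : α → E} {d : E}

theorem HasFDerivAt.tendsto_slope_of_tendsto {f : E → ℝ} {A : E →L[ℝ] ℝ} {x : E}
    (hf : HasFDerivAt f A x) (ht : Tendsto t l (𝓝[>] 0)) (hv : Tendsto v l (𝓝 d)) :
    Tendsto (fun a => (f (x + t a • v a) - f x) / t a) l (𝓝 (A d)) := by
  have ht_pos : ∀ᶠ a in l, 0 < t a := ht self_mem_nhdsWithin
  have htv : Tendsto (fun a => t a • v a) l (𝓝 0) := by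
    simpa using (tendsto_nhds_of_tendsto_nhdsWithin ht).smul hv
  have hlim := (hasFDerivWithinAt_univ.2 hf).lim (c := fun a => (t a)⁻¹) htv
    (.of_forall fun _ => Set.mem_univ _)
    (hv.congr' <| ht_pos.mono fun a ha => by simp [smul_smul, ha.ne'])
  simpa only [smul_eq_mul, div_eq_inv_mul] using hlim

theorem LipschitzOnWith.tendsto_slope_of_tendsto {φ : E → ℝ} {K : NNReal} {s : Set E}
    {x : E} {L : ℝ} (hφ : LipschitzOnWith K φ s) (hs : s ∈ 𝓝 x)
    (hL : Tendsto (fun τ : ℝ => (φ (x + τ • d) - φ x) / τ) (𝓝[>] 0) (𝓝 L))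
    (ht : Tendsto t l (𝓝[>] 0)) (hv : Tendsto v l (𝓝 d)) :
    Tendsto (fun a => (φ (x + t a • v a) - φ x) / t a) l (𝓝 L) := by
  have ht_pos : ∀ᶠ a in l, 0 < t a := ht self_mem_nhdsWithin
  have ht0 : Tendsto t l (𝓝 0) := tendsto_nhds_of_tendsto_nhdsWithin ht
  have hmem : ∀ w : α → E, Tendsto w l (𝓝 d) → ∀ᶠ a in l, x + t a • w a ∈ s := fun w hw =>
    (by simpa using tendsto_const_nhds.add (ht0.smul hw) :
      Tendsto (fun a => x + t a • w a) l (𝓝 x)).eventually_mem hs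
  have hgap : Tendsto (fun a => (φ (x + t a • v a) - φ (x + t a • d)) / t a) l (𝓝 0) := by
    refine squeeze_zero_norm' ?_ (by simpa using ((hv.sub_const d).norm.const_mul (K : ℝ)))
    filter_upwards [ht_pos, hmem v hv, hmem _ tendsto_const_nhds] with a hta hva hda
    rw [norm_div, Real.norm_of_nonneg hta.le, div_le_iff₀ hta, ← dist_eq_norm]
    calc dist (φ (x + t a • v a)) (φ (x + t a • d))
        ≤ K * dist (x + t a • v a) (x + t a • d) := hφ.dist_le_mul _ hva _ hda
      _ = K * ‖v a - d‖ * t a := by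
        rw [dist_add_left, dist_smul₀, Real.norm_of_nonneg hta.le, dist_eq_norm]; ring
  simpa using (hgap.add (hL.comp ht)).congr fun a => by
    simp only [Function.comp_apply]; rw [← add_div, sub_add_sub_cancel]

end HadamardDirectionalDerivative

theorem no_decrease_in_optimal_value_constraint_general {n m q : ℕ}
    (f : ((Fin n → ℝ) × (Fin m → ℝ)) → ℝ)
    (g : ((Fin n → ℝ) × (Fin m → ℝ)) → Fin q → ℝ)
    (hf : ContDiff ℝ 1 f)
    (x₀ : Fin n → ℝ) (y₀ : Fin m → ℝ)
    (φ : (Fin n → ℝ) → ℝ)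
    (hφ : ∀ x, (φ x : EReal) =
      sInf {v : EReal | ∃ y : Fin m → ℝ, (∀ i, g (x, y) i ≤ 0) ∧ v = ((f (x, y) : ℝ) : EReal)})
    (hval : f (x₀, y₀) = φ x₀)
    (hlip : ∃ (K : NNReal) (s : Set (Fin n → ℝ)), s ∈ 𝓝 x₀ ∧ LipschitzOnWith K φ s)
    (Dφ : (Fin n → ℝ) → ℝ)
    (hDφ : ∀ δ, Tendsto (fun t : ℝ => (φ (x₀ + t • δ) - φ x₀) / t) (𝓝[>] 0) (𝓝 (Dφ δ)))
    (hACQ : bouligandTangentCone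
        {p : (Fin n → ℝ) × (Fin m → ℝ) | ∀ i, g p i ≤ 0} (x₀, y₀) =
      {d : (Fin n → ℝ) × (Fin m → ℝ) | ∀ i, g (x₀, y₀) i = 0 →
        fderiv ℝ (fun p => g p i) (x₀, y₀) d ≤ 0}) :
    ∀ d : (Fin n → ℝ) × (Fin m → ℝ),
      (∀ i, g (x₀, y₀) i = 0 → fderiv ℝ (fun p => g p i) (x₀, y₀) d ≤ 0) →
      0 ≤ fderiv ℝ f (x₀, y₀) d - Dφ d.1 := by
  intro d hd
  obtain ⟨t, v, ht_pos, ht, hv, hfeas⟩ :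
      d ∈ bouligandTangentCone {p | ∀ i, g p i ≤ 0} (x₀, y₀) := hACQ ▸ hd
  have ht' : Tendsto t atTop (𝓝[>] 0) :=
    tendsto_nhdsWithin_iff.2 ⟨ht, .of_forall ht_pos⟩
  have hφ_le : ∀ p : (Fin n → ℝ) × (Fin m → ℝ), (∀ i, g p i ≤ 0) → φ p.1 ≤ f p :=
    fun p hp => EReal.coe_le_coe_iff.1 <| (hφ p.1).trans_le (sInf_le ⟨p.2, hp, rfl⟩)
  obtain ⟨K, s, hs, hK⟩ := hlip
  have hf_lim := ((hf.differentiable one_ne_zero) (x₀, y₀)).hasFDerivAt.tendsto_slope_of_tendsto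
    ht' hv
  have hφ_lim := hK.tendsto_slope_of_tendsto hs (hDφ d.1) ht' (hv.fst_nhds)
  have hslope_le : ∀ k, (φ (x₀ + t k • (v k).1) - φ x₀) / t k ≤
      (f ((x₀, y₀) + t k • v k) - f (x₀, y₀)) / t k := fun k => by
    gcongr
    · exact (ht_pos k).le
    · exact hφ_le _ (hfeas k)
    · exact hval.le
  exact sub_nonneg.2 (le_of_tendsto_of_tendsto' hφ_lim hf_lim hslope_le)

theorem no_decrease_in_optimal_value_constraint {n m q : ℕ}
    (f : ((Fin n → ℝ) × (Fin m → ℝ)) → ℝ)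
    (g : ((Fin n → ℝ) × (Fin m → ℝ)) → Fin q → ℝ)
    (hf : ContDiff ℝ 1 f) (hg : ∀ i, ContDiff ℝ 1 (fun p => g p i))
    (x₀ : Fin n → ℝ) (y₀ : Fin m → ℝ)
    (φ : (Fin n → ℝ) → ℝ)
    (hφ : ∀ x, (φ x : EReal) =
      sInf {v : EReal | ∃ y : Fin m → ℝ, (∀ i, g (x, y) i ≤ 0) ∧ v = ((f (x, y) : ℝ) : EReal)})
    (hfeas : ∀ i, g (x₀, y₀) i ≤ 0) (hval : f (x₀, y₀) = φ x₀)
    (hlip : ∃ (K : NNReal) (s : Set (Fin n → ℝ)), s ∈ 𝓝 x₀ ∧ LipschitzOnWith K φ s)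
    (Dφ : (Fin n → ℝ) → ℝ)
    (hDφ : ∀ δ, Tendsto (fun t : ℝ => (φ (x₀ + t • δ) - φ x₀) / t) (𝓝[>] 0) (𝓝 (Dφ δ)))
    (hACQ : bouligandTangentCone
        {p : (Fin n → ℝ) × (Fin m → ℝ) | ∀ i, g p i ≤ 0} (x₀, y₀) =
      {d : (Fin n → ℝ) × (Fin m → ℝ) | ∀ i, g (x₀, y₀) i = 0 →
        fderiv ℝ (fun p => g p i) (x₀, y₀) d ≤ 0}) :
    ∀ d : (Fin n → ℝ) × (Fin m → ℝ),
      (∀ i, g (x₀, y₀) i = 0 → fderiv ℝ (fun p => g p i) (x₀, y₀) d ≤ 0) →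
      0 ≤ fderiv ℝ f (x₀, y₀) d - Dφ d.1 :=
  no_decrease_in_optimal_value_constraint_general f g hf x₀ y₀ φ hφ hval hlip Dφ hDφ hACQ
end
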